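/- arXiv:1912.06508 — 7 statements merged into one kernel-verified Lean document; each statement's English description precedes it below -/
import Mathlib

section
/- Let f : ℝ^N → ℝ be differentiable with L-Lipschitz gradient (L > 0). Let x, x' ∈ ℝ^N with s := x' − x ≠ 0 and y := ∇f(x') − ∇f(x), and suppose the safeguard condition ⟨s, y⟩ ≥ δ‖s‖² holds for some δ > 0. Then the LBFGS scaling parameter γ := ‖y‖² / ⟨y, s⟩ satisfies δ ≤ γ ≤ L²/δ. -/
open scoped RealInnerProductSpace

/-- Lemma 1, part 1, of the paper: bounds on the LBFGS scaling
parameter `γ = ‖y‖² / ⟪y, s⟫` under the safeguard condition `⟨s, y⟩ ≥ δ‖s‖²`,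
when `y` is the gradient difference of an `L`-Lipschitz-gradient function. -/
theorem lbfgs_gamma_bounds {N : ℕ} (f : EuclideanSpace ℝ (Fin N) → ℝ) (L δ : ℝ)
    (hL : 0 < L) (hδ : 0 < δ)
    (hf : Differentiable ℝ f)
    (hlip : LipschitzWith (Real.toNNReal L) (fun z => gradient f z))
    (x x' s y : EuclideanSpace ℝ (Fin N))
    (hs : s = x' - x) (hs0 : s ≠ 0)
    (hy : y = gradient f x' - gradient f x)
    (hsafe : ⟪s, y⟫ ≥ δ * ‖s‖ ^ 2) :
    δ ≤ ‖y‖ ^ 2 / ⟪y, s⟫ ∧ ‖y‖ ^ 2 / ⟪y, s⟫ ≤ L ^ 2 / δ := by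
  have hns : 0 < ‖s‖ := norm_pos_iff.mpr hs0
  have hip : ⟪y, s⟫ ≥ δ * ‖s‖ ^ 2 := by rwa [real_inner_comm]
  have hip0 : 0 < ⟪y, s⟫ := lt_of_lt_of_le (by positivity) hip
  have hCS : ⟪y, s⟫ ≤ ‖y‖ * ‖s‖ := real_inner_le_norm y s
  have hyn : ‖y‖ ≤ L * ‖s‖ := by
    have := hlip.dist_le_mul x' x
    simp only [dist_eq_norm] at this
    rw [hy, hs]
    calc ‖gradient f x' - gradient f x‖ ≤ (Real.toNNReal L) * ‖x' - x‖ := this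
    _ = L * ‖x' - x‖ := by rw [Real.coe_toNNReal _ hL.le]
  constructor
  · rw [le_div_iff₀ hip0]
    nlinarith [sq_nonneg (‖y‖ * ‖s‖ - ⟪y, s⟫)]
  · rw [div_le_div_iff₀ hip0 hδ]
    nlinarith [mul_le_mul hyn hyn (norm_nonneg y) (by positivity : (0:ℝ) ≤ L * ‖s‖), mul_le_mul_of_nonneg_left hip (sq_nonneg L)]
end

section
/- Fix x ∈ ℝ^N, an N×N symmetric matrix H with H ⪯ c₁ I for some c₁ > 0, a differentiable f : ℝ^N → ℝ, and a convex Ψ : ℝ^N → ℝ. Define Q(p) = ⟨∇f(x), p⟩ + (1/2)⟨p, H p⟩ + Ψ(x + p) − Ψ(x), f̂(p) = ⟨∇f(x), p⟩ + (1/2)⟨p, H p⟩ (so ∇f̂(p) = ∇f(x) + H p), and for ψ > 0 and a current point p define Q̂_ψ(d) = ⟨∇f̂(p), d⟩ + (ψ/2)‖d‖² + Ψ(x + p + d) − Ψ(x + p). If d ∈ ℝ^N satisfies Q̂_ψ(d) ≤ 0 (e.g., d is at least as good as d = 0 for minimizing Q̂_ψ), then Q(p + d) − Q(p) ≤ ((c₁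 − ψ)/2)‖d‖². Consequently, for any σ₀ ∈ (0,1), if ψ ≥ c₁/(1 − σ₀), then the SpaRSA acceptance condition Q(p + d) ≤ Q(p) − (σ₀ ψ/2)‖d‖² holds. -/
open scoped RealInnerProductSpace

/-- part 2 of Lemma 1 of the paper: if the proximal subproblem value
`Q̂_ψ(d) ≤ 0` (e.g. `d` is at least as good as `0`), then
`Q(p + d) − Q(p) ≤ ((c₁ − ψ)/2)‖d‖²`; consequently once `ψ ≥ c₁/(1 − σ₀)` the SpaRSA
acceptance condition `Q(p + d) ≤ Q(p) − (σ₀ψ/2)‖d‖²` holds. -/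
theorem sparsa_psi_bound {N : ℕ} (c₁ ψ : ℝ) (hc₁ : 0 < c₁) (hψ : 0 < ψ)
    (H : EuclideanSpace ℝ (Fin N) →L[ℝ] EuclideanSpace ℝ (Fin N))
    (hHsymm : ∀ v w, ⟪H v, w⟫ = ⟪v, H w⟫)
    (hHub : ∀ v, ⟪v, H v⟫ ≤ c₁ * ‖v‖ ^ 2)
    (f : EuclideanSpace ℝ (Fin N) → ℝ) (hf : Differentiable ℝ f)
    (Ψ : EuclideanSpace ℝ (Fin N) → ℝ) (hΨ : ConvexOn ℝ Set.univ Ψ)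
    (x p d : EuclideanSpace ℝ (Fin N))
    (Q : EuclideanSpace ℝ (Fin N) → ℝ)
    (hQ : ∀ q, Q q = ⟪gradient f x, q⟫ + (1 / 2) * ⟪q, H q⟫ + Ψ (x + q) - Ψ x)
    (hd : ⟪gradient f x + H p, d⟫ + (ψ / 2) * ‖d‖ ^ 2 + Ψ (x + p + d) - Ψ (x + p) ≤ 0) :
    Q (p + d) - Q p ≤ (c₁ - ψ) / 2 * ‖d‖ ^ 2 ∧
    ∀ σ₀ : ℝ, 0 < σ₀ → σ₀ < 1 → c₁ / (1 - σ₀) ≤ ψ →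
      Q (p + d) ≤ Q p - σ₀ * ψ / 2 * ‖d‖ ^ 2 := by
  have key : Q (p + d) - Q p
      = ⟪gradient f x + H p, d⟫ + (1 / 2) * ⟪d, H d⟫ + Ψ (x + p + d) - Ψ (x + p) := by
    rw [hQ, hQ]
    simp only [map_add, inner_add_left, inner_add_right, ← add_assoc]
    have h1 : (⟪d, H p⟫ : ℝ) = ⟪p, H d⟫ := by
      rw [real_inner_comm]; exact hHsymm p d
    linear_combination (-(1/2) : ℝ) * h1 - real_inner_comm d (H p)
  have h1 : Q (p + d) - Q p ≤ (c₁ - ψ) / 2 * ‖d‖ ^ 2 := by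
    have := hHub d
    nlinarith [hd]
  refine ⟨h1, fun σ₀ hσ0 hσ1 hσψ => ?_⟩
  have h2 : c₁ ≤ (1 - σ₀) * ψ := by
    rw [div_le_iff₀ (by linarith)] at hσψ
    linarith [hσψ]
  nlinarith [sq_nonneg ‖d‖]
end

section
/- Fix x ∈ ℝ^N, an N×N symmetric matrix H with c₂ I ⪯ H ⪯ c₁ I for some 0 < c₂ ≤ c₁, a differentiable f : ℝ^N → ℝ, and a convex Ψ : ℝ^N → ℝ. Define Q(p) = ⟨∇f(x), p⟩ + (1/2)⟨p, H p⟩ + Ψ(x + p) − Ψ(x), with minimum value Q*, f̂(p) = ⟨∇f(x), p⟩ + (1/2)⟨p, H p⟩, and for ψ > 0 define Q̂_ψ(d) = ⟨∇f̂(p), d⟩ + (ψ/2)‖d‖² + Ψ(x + p + d) − Ψ(x + p). Let p⁽ⁱ⁾ ∈ ℝ^N, let d* be the exact minimizer of Q̂_ψ at p = p⁽ⁱ⁾, set p⁽ⁱ⁺¹⁾ = p⁽ⁱ⁾ + d*, and suppose the acceptance condition Q(p⁽ⁱ⁺¹⁾) ≤ Q(p⁽ⁱ⁾) − (σ₀ ψ/2)‖d*‖²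 holds for some σ₀ ∈ (0,1). Then (1 + c₂ σ₀ ψ/(2(c₁² + ψ²))) · (Q(p⁽ⁱ⁺¹⁾) − Q*) ≤ Q(p⁽ⁱ⁾) − Q*; i.e., SpaRSA contracts the subproblem optimality gap Q-linearly. -/
open scoped RealInnerProductSpace

set_option maxHeartbeats 2000000 in
/-- part 3 of Lemma 1 of the paper: Q-linear contraction of the
subproblem optimality gap by one exact SpaRSA step. Here `d*` is the exact minimizer
of the proximal model `Q̂_ψ` at `p⁽ⁱ⁾`, `p⁽ⁱ⁺¹⁾ = p⁽ⁱ⁾ + d*`, and the acceptance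
condition holds; then
`(1 + c₂σ₀ψ/(2(c₁² + ψ²))) (Q(p⁽ⁱ⁺¹⁾) − Q*) ≤ Q(p⁽ⁱ⁾) − Q*`. -/
theorem sparsa_qlinear {N : ℕ} (c₁ c₂ σ₀ ψ : ℝ)
    (hc₂ : 0 < c₂) (hc₁ : c₂ ≤ c₁) (hσ₀ : 0 < σ₀) (hσ₀' : σ₀ < 1) (hψ : 0 < ψ)
    (H : EuclideanSpace ℝ (Fin N) →L[ℝ] EuclideanSpace ℝ (Fin N))
    (hHsymm : ∀ v w, ⟪H v, w⟫ = ⟪v, H w⟫)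
    (hHlb : ∀ v, c₂ * ‖v‖ ^ 2 ≤ ⟪v, H v⟫)
    (hHub : ∀ v, ⟪v, H v⟫ ≤ c₁ * ‖v‖ ^ 2)
    (f : EuclideanSpace ℝ (Fin N) → ℝ) (hf : Differentiable ℝ f)
    (Ψ : EuclideanSpace ℝ (Fin N) → ℝ) (hΨ : ConvexOn ℝ Set.univ Ψ)
    (x : EuclideanSpace ℝ (Fin N))
    (Q : EuclideanSpace ℝ (Fin N) → ℝ)
    (hQ : ∀ q, Q q = ⟪gradient f x, q⟫ + (1 / 2) * ⟪q, H q⟫ + Ψ (x + q) - Ψ x)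
    (Qstar : ℝ) (hatt : ∃ qmin, Q qmin = Qstar) (hlb : ∀ q, Qstar ≤ Q q)
    (pi dstar : EuclideanSpace ℝ (Fin N))
    (hdstar : ∀ d : EuclideanSpace ℝ (Fin N),
      ⟪gradient f x + H pi, dstar⟫ + (ψ / 2) * ‖dstar‖ ^ 2 + Ψ (x + pi + dstar) - Ψ (x + pi)
        ≤ ⟪gradient f x + H pi, d⟫ + (ψ / 2) * ‖d‖ ^ 2 + Ψ (x + pi + d) - Ψ (x + pi))
    (haccept : Q (pi + dstar) ≤ Q pi - σ₀ * ψ / 2 * ‖dstar‖ ^ 2) :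
    (1 + c₂ * σ₀ * ψ / (2 * (c₁ ^ 2 + ψ ^ 2))) * (Q (pi + dstar) - Qstar)
      ≤ Q pi - Qstar := by
  obtain ⟨qmin, hqmin⟩ := hatt
  set g := gradient f x with hg
  clear_value g
  have hpsd : ∀ v : EuclideanSpace ℝ (Fin N), 0 ≤ ⟪v, H v⟫ := fun v =>
    le_trans (by positivity) (hHlb v)
  -- expansion of the quadratic form
  have hexp : ∀ u w : EuclideanSpace ℝ (Fin N),
      ⟪u + w, H (u + w)⟫ = ⟪u, H u⟫ + 2 * ⟪H u, w⟫ + ⟪w, H w⟫ := by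
    intro u w
    have h1 : ⟪w, H u⟫ = ⟪H u, w⟫ := real_inner_comm _ _
    have h2 : ⟪u, H w⟫ = ⟪H u, w⟫ := (hHsymm u w).symm
    rw [map_add, inner_add_left, inner_add_right, inner_add_right, h1, h2]
    ring
  -- ‖H dstar‖² ≤ c₁² ‖dstar‖²
  have hHd : ‖H dstar‖ ^ 2 ≤ c₁ ^ 2 * ‖dstar‖ ^ 2 := by
    have hquad : ∀ t : ℝ,
        0 ≤ ⟪dstar, H dstar⟫ * (t * t) + (2 * ‖H dstar‖ ^ 2) * t
          + ⟪H dstar, H (H dstar)⟫ := by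
      intro t
      have h0 := hpsd (H dstar + t • dstar)
      have he : ⟪H dstar + t • dstar, H (H dstar + t • dstar)⟫
          = ⟪H dstar, H (H dstar)⟫ + 2 * (t * ⟪H (H dstar), dstar⟫)
            + t * t * ⟪dstar, H dstar⟫ := by
        rw [hexp (H dstar) (t • dstar)]
        simp only [map_smul, real_inner_smul_left, real_inner_smul_right, smul_eq_mul]
        ring
      have hsy : ⟪H (H dstar), dstar⟫ = ‖H dstar‖ ^ 2 := by
        rw [hHsymm (H dstar) dstar, real_inner_self_eq_norm_sq]
      rw [hsy] at he
      nlinarith [h0, he]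
    have hd := discrim_le_zero hquad
    rw [discrim] at hd
    have h1 : ⟪dstar, H dstar⟫ ≤ c₁ * ‖dstar‖ ^ 2 := hHub dstar
    have h2 : ⟪H dstar, H (H dstar)⟫ ≤ c₁ * ‖H dstar‖ ^ 2 := hHub (H dstar)
    have h3 : 0 ≤ ⟪dstar, H dstar⟫ := hpsd dstar
    have h4 : 0 ≤ ⟪H dstar, H (H dstar)⟫ := hpsd (H dstar)
    -- 4‖Hd‖⁴ ≤ 4 (c₁‖d‖²)(c₁‖Hd‖²)
    have h5 : ‖H dstar‖ ^ 2 * ‖H dstar‖ ^ 2 ≤ (c₁ ^ 2 * ‖dstar‖ ^ 2) * ‖H dstar‖ ^ 2 := by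
      nlinarith [hd, h1, h2, h3, h4, sq_nonneg (‖H dstar‖), sq_nonneg (‖dstar‖),
        mul_le_mul_of_nonneg_left h2 h3]
    rcases eq_or_lt_of_le (sq_nonneg ‖H dstar‖) with h6 | h6
    · rw [← h6]; positivity
    · exact le_of_mul_le_mul_right h5 h6
  -- ‖H dstar - ψ • dstar‖² ≤ (c₁² + ψ²)‖dstar‖²
  have hwbd : ‖H dstar - ψ • dstar‖ ^ 2 ≤ (c₁ ^ 2 + ψ ^ 2) * ‖dstar‖ ^ 2 := by
    have e1 : ‖H dstar - ψ • dstar‖ ^ 2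
        = ‖H dstar‖ ^ 2 - 2 * (ψ * ⟪H dstar, dstar⟫) + ψ ^ 2 * ‖dstar‖ ^ 2 := by
      rw [norm_sub_sq_real, real_inner_smul_right, norm_smul]
      simp [mul_pow, sq_abs]
    have e2 : ⟪H dstar, dstar⟫ = ⟪dstar, H dstar⟫ := real_inner_comm _ _
    nlinarith [hpsd dstar, hψ, hHd]
  -- the key variational inequality (★)
  set pplus := pi + dstar with hpplus
  have hstar : 0 ≤ ⟪g + H pi + ψ • dstar, qmin - pi - dstar⟫
      + Ψ (x + qmin) - Ψ (x + pplus) := by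
    set u := qmin - pi - dstar with hu
    set A := ⟪g + H pi + ψ • dstar, u⟫ + Ψ (x + qmin) - Ψ (x + pplus) with hA
    set B := (ψ / 2) * ‖u‖ ^ 2 with hB
    have hBnn : 0 ≤ B := by rw [hB]; positivity
    clear_value A B
    have hkey : ∀ t : ℝ, 0 < t → t < 1 → 0 ≤ A + t * B := by
      intro t ht0 ht1
      have hd := hdstar (dstar + t • u)
      have hΨc : Ψ (x + pi + (dstar + t • u))
          ≤ (1 - t) * Ψ (x + pplus) + t * Ψ (x + qmin) := by
        have hc := hΨ.2 (Set.mem_univ (x + pplus)) (Set.mem_univ (x + qmin))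
          (by linarith : (0:ℝ) ≤ 1 - t) (le_of_lt ht0) (by ring)
        have heq : (1 - t) • (x + pplus) + t • (x + qmin) = x + pi + (dstar + t • u) := by
          rw [hpplus, hu]
          module
        rw [heq] at hc
        exact hc
      have hlin : ⟪g + H pi, dstar + t • u⟫ = ⟪g + H pi, dstar⟫ + t * ⟪g + H pi, u⟫ := by
        rw [inner_add_right, real_inner_smul_right]
      have hnorm : ‖dstar + t • u‖ ^ 2
          = ‖dstar‖ ^ 2 + 2 * (t * ⟪dstar, u⟫) + t ^ 2 * ‖u‖ ^ 2 := by
        rw [norm_add_sq_real, real_inner_smul_right, norm_smul]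
        simp only [Real.norm_eq_abs, mul_pow, sq_abs]
      have hAeq : A = ⟪g + H pi, u⟫ + ψ * ⟪dstar, u⟫ + Ψ (x + qmin) - Ψ (x + pplus) := by
        rw [hA, inner_add_left, real_inner_smul_left]
      rw [hlin, hnorm] at hd
      have h2 : 0 ≤ t * ⟪g + H pi, u⟫ + (ψ / 2) * (2 * (t * ⟪dstar, u⟫) + t ^ 2 * ‖u‖ ^ 2)
          + (Ψ (x + pi + (dstar + t • u)) - Ψ (x + pplus)) := by
        have hpe : Ψ (x + pi + dstar) = Ψ (x + pplus) := by rw [hpplus, add_assoc]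
        linarith [hd, hpe]
      have h3 : Ψ (x + pi + (dstar + t • u)) - Ψ (x + pplus)
          ≤ t * (Ψ (x + qmin) - Ψ (x + pplus)) := by linarith [hΨc]
      have h4 : 0 ≤ t * ⟪g + H pi, u⟫ + ψ * (t * ⟪dstar, u⟫) + (ψ / 2) * t ^ 2 * ‖u‖ ^ 2
          + t * (Ψ (x + qmin) - Ψ (x + pplus)) := by linarith [h2, h3]
      have h5 : t * (A + t * B) = t * ⟪g + H pi, u⟫ + ψ * (t * ⟪dstar, u⟫)
          + (ψ / 2) * t ^ 2 * ‖u‖ ^ 2 + t * (Ψ (x + qmin) - Ψ (x + pplus)) := by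
        rw [hAeq, hB]; ring
      have h6 : 0 ≤ t * (A + t * B) := by rw [h5]; exact h4
      exact nonneg_of_mul_nonneg_right h6 ht0
    by_contra hneg
    push_neg at hneg
    set t := min (1/2 : ℝ) ((-A) / (2 * (B + 1))) with ht
    have htpos0 : 0 < t :=
      lt_min (by norm_num) (div_pos (by linarith) (by linarith))
    have htlt0 : t ≤ 1/2 := min_le_left _ _
    have h7 : t ≤ (-A) / (2 * (B + 1)) := min_le_right _ _
    clear_value t
    have htpos : 0 < t := htpos0
    have htlt : t < 1 := lt_of_le_of_lt htlt0 (by norm_num)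
    have h6 := hkey t htpos htlt
    have h8 : t * (2 * (B + 1)) ≤ -A := by
      rw [← le_div_iff₀ (by linarith : (0:ℝ) < 2 * (B + 1))]; exact h7
    have h8' : 2 * (t * B) + 2 * t ≤ -A := by linear_combination h8
    linarith [mul_nonneg (le_of_lt htpos) hBnn, h6, h8', htpos]
  -- optimality gap bound: Q(pplus) - Qstar ≤ (c₁²+ψ²)/(2c₂) ‖dstar‖², cleared form
  have hgap : 2 * c₂ * (Q pplus - Qstar) ≤ (c₁ ^ 2 + ψ ^ 2) * ‖dstar‖ ^ 2 := by
    set e := qmin - pplus with he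
    have heq : qmin = pplus + e := by rw [he]; abel
    have hqq : ⟪qmin, H qmin⟫ = ⟪pplus, H pplus⟫ + 2 * ⟪H pplus, e⟫ + ⟪e, H e⟫ := by
      rw [heq]; exact hexp pplus e
    have hge : ⟪g, qmin⟫ = ⟪g, pplus⟫ + ⟪g, e⟫ := by rw [heq, inner_add_right]
    have hdiff : Qstar - Q pplus
        = ⟪g, e⟫ + ⟪H pplus, e⟫ + (1/2) * ⟪e, H e⟫ + (Ψ (x + qmin) - Ψ (x + pplus)) := by
      rw [← hqmin, hQ qmin, hQ pplus, hqq, hge]; ring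
    have hHe : ⟪H pplus, e⟫ = ⟪H pi, e⟫ + ⟪H dstar, e⟫ := by
      rw [hpplus, map_add, inner_add_left]
    have hue : qmin - pi - dstar = e := by rw [he, hpplus]; abel
    rw [hue] at hstar
    have hstar' : -(⟪g, e⟫ + ⟪H pi, e⟫ + ψ * ⟪dstar, e⟫) ≤ Ψ (x + qmin) - Ψ (x + pplus) := by
      have : ⟪g + H pi + ψ • dstar, e⟫ = ⟪g, e⟫ + ⟪H pi, e⟫ + ψ * ⟪dstar, e⟫ := by
        rw [inner_add_left, inner_add_left, real_inner_smul_left]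
      linarith [hstar, this]
    have hw : ⟪H dstar - ψ • dstar, e⟫ = ⟪H dstar, e⟫ - ψ * ⟪dstar, e⟫ := by
      rw [inner_sub_left, real_inner_smul_left]
    have hCS : -(‖H dstar - ψ • dstar‖ * ‖e‖) ≤ ⟪H dstar - ψ • dstar, e⟫ := by
      have := abs_real_inner_le_norm (H dstar - ψ • dstar) e
      cases' abs_le.mp this with h _
      linarith
    have hlbe : c₂ * ‖e‖ ^ 2 ≤ ⟪e, H e⟫ := hHlb e
    -- Qstar - Q pplus ≥ -‖w‖‖e‖ + (c₂/2)‖e‖²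
    have hmain : -(‖H dstar - ψ • dstar‖ * ‖e‖) + (c₂ / 2) * ‖e‖ ^ 2 ≤ Qstar - Q pplus := by
      rw [hdiff, hHe]
      linarith [hstar', hCS, hlbe, hw]
    -- AM-GM: ‖w‖‖e‖ - (c₂/2)‖e‖² ≤ ‖w‖²/(2c₂)
    have hamgm : 2 * c₂ * (‖H dstar - ψ • dstar‖ * ‖e‖ - (c₂ / 2) * ‖e‖ ^ 2)
        ≤ ‖H dstar - ψ • dstar‖ ^ 2 := by
      nlinarith [sq_nonneg (‖H dstar - ψ • dstar‖ - c₂ * ‖e‖)]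
    nlinarith [hmain, hamgm, hwbd, hc₂]
  -- finish
  have hCpos : (0:ℝ) < c₁ ^ 2 + ψ ^ 2 := by positivity
  have hGnn : 0 ≤ Q pplus - Qstar := by linarith [hlb pplus]
  have haccept' : σ₀ * ψ / 2 * ‖dstar‖ ^ 2 ≤ Q pi - Q pplus := by
    rw [hpplus]; linarith [haccept]
  have hmain2 : c₂ * σ₀ * ψ * (Q pplus - Qstar) ≤ 2 * (c₁ ^ 2 + ψ ^ 2) * (Q pi - Q pplus) := by
    have t1 : σ₀ * ψ / 2 * (2 * c₂ * (Q pplus - Qstar))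
        ≤ σ₀ * ψ / 2 * ((c₁ ^ 2 + ψ ^ 2) * ‖dstar‖ ^ 2) :=
      mul_le_mul_of_nonneg_left hgap (by positivity)
    have t2 : (c₁ ^ 2 + ψ ^ 2) * (σ₀ * ψ / 2 * ‖dstar‖ ^ 2)
        ≤ (c₁ ^ 2 + ψ ^ 2) * (Q pi - Q pplus) :=
      mul_le_mul_of_nonneg_left haccept' hCpos.le
    have t3 : 0 ≤ (c₁ ^ 2 + ψ ^ 2) * (σ₀ * ψ / 2 * ‖dstar‖ ^ 2) := by positivity
    linarith [t1, t2, t3]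
  have hdiv : c₂ * σ₀ * ψ / (2 * (c₁ ^ 2 + ψ ^ 2)) * (Q pplus - Qstar) ≤ Q pi - Q pplus := by
    rw [div_mul_eq_mul_div, div_le_iff₀ (by positivity : (0:ℝ) < 2 * (c₁ ^ 2 + ψ ^ 2))]
    nlinarith [hmain2]
  have : Q (pi + dstar) = Q pplus := by rw [hpplus]
  rw [this]
  nlinarith [hdiv, hGnn]
end

section
/- Fix x ∈ ℝ^N, an N×N symmetric matrix H with H ⪰ c₂ I for some c₂ > 0, a differentiable f : ℝ^N → ℝ, and a convex Ψ : ℝ^N → ℝ. Define Q(p) = ⟨∇f(x), p⟩ + (1/2)⟨p, H p⟩ + Ψ(x + p) − Ψ(x), with minimum value Q* (so Q(0) = 0 and Q* ≤ 0). Let η ∈ [0,1) and S ≥ 1 an integer, and suppose p ∈ ℝ^N satisfies the inexactness condition Q(p) − Q* ≤ η^S (Q(0) − Q*). Then Δ := ⟨∇f(x), p⟩ + Ψ(x + p) − Ψ(x) satisfies Δ ≤ − c₂ ‖p‖² / (1 + η^{S/2}). -/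
open scoped RealInnerProductSpace

open Set Filter Topology

/-!
Along the segment `t ↦ t • p`, convexity of `Ψ` bounds `Q (t • p)` by the parabola
`t Δ + t² a` with `a = ⟪p, H p⟫ / 2`. Since `Q p ≤ (1 - η^S) Q* ≤ (1 - η^S) Q (t • p)`, this gives
`Δ + a ≤ (1 - θ²)(t Δ + t² a)` for all `t ∈ [0, 1]`, where `θ = η^{S/2}`. Choosing
`t = 1 / (1 + θ)` yields `(1 + θ) Δ + 2a ≤ 0` when `θ > 0`; when `θ = 0` (an exact minimiser)
the same bound is the first-order optimality condition, obtained by letting `t → 1`.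
Finally `2a ≥ c₂ ‖p‖²`.
-/

noncomputable def quadModel {E : Type*} [NormedAddCommGroup E] [InnerProductSpace ℝ E]
    (g : E) (H : E →L[ℝ] E) (Ψ : E → ℝ) (x q : E) : ℝ :=
  ⟪g, q⟫ + 1 / 2 * ⟪q, H q⟫ + Ψ (x + q) - Ψ x

lemma ConvexOn.sub_le_mul_sub {E : Type*} [AddCommGroup E] [Module ℝ E] {Ψ : E → ℝ}
    (hΨ : ConvexOn ℝ univ Ψ) (x p : E) {t : ℝ} (ht0 : 0 ≤ t) (ht1 : t ≤ 1) :
    Ψ (x + t • p) - Ψ x ≤ t * (Ψ (x + p) - Ψ x) := by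
  have h := hΨ.2 (mem_univ x) (mem_univ (x + p)) (sub_nonneg.2 ht1) ht0 (sub_add_cancel 1 t)
  have hseg : (1 - t) • x + t • (x + p) = x + t • p := by module
  rw [hseg, smul_eq_mul, smul_eq_mul] at h
  linarith

lemma quadModel_smul_le {E : Type*} [NormedAddCommGroup E] [InnerProductSpace ℝ E]
    (g : E) (H : E →L[ℝ] E) {Ψ : E → ℝ} (hΨ : ConvexOn ℝ univ Ψ) (x p : E)
    {t : ℝ} (ht0 : 0 ≤ t) (ht1 : t ≤ 1) :
    quadModel g H Ψ x (t • p) ≤ t * (⟪g, p⟫ + Ψ (x + p) - Ψ x) + t ^ 2 * (⟪p, H p⟫ / 2) := by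
  have hΨt := hΨ.sub_le_mul_sub x p ht0 ht1
  have hquad : ⟪t • p, H (t • p)⟫ = t ^ 2 * ⟪p, H p⟫ := by
    rw [map_smul, real_inner_smul_left, real_inner_smul_right]; ring
  rw [quadModel, real_inner_smul_right, hquad]
  linarith

lemma add_two_mul_nonpos_of_forall_le {D a : ℝ}
    (h : ∀ t ∈ Icc (0 : ℝ) 1, D + a ≤ t * D + t ^ 2 * a) : D + 2 * a ≤ 0 := by
  have hlt : ∀ t ∈ Ioo (0 : ℝ) 1, D + (1 + t) * a ≤ 0 := fun t ht ↦ by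
    have h1 := h t (Ioo_subset_Icc_self ht)
    have hpos : 0 < 1 - t := sub_pos.2 ht.2
    nlinarith
  have hlim : Tendsto (fun t : ℝ ↦ D + (1 + t) * a) (𝓝[<] 1) (𝓝 (D + 2 * a)) := by
    have hcont : Continuous fun t : ℝ ↦ D + (1 + t) * a := by fun_prop
    simpa [one_add_one_eq_two] using (hcont.tendsto 1).mono_left nhdsWithin_le_nhds
  exact le_of_tendsto hlim (eventually_of_mem (Ioo_mem_nhdsLT one_pos) hlt)

lemma one_add_mul_add_two_mul_nonpos_of_pos {D a θ : ℝ} (hθ : 0 < θ)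
    (h : ∀ t ∈ Icc (0 : ℝ) 1, D + a ≤ (1 - θ ^ 2) * (t * D + t ^ 2 * a)) :
    (1 + θ) * D + 2 * a ≤ 0 := by
  have hθ1 : 0 < 1 + θ := by linarith
  have ht := h (1 / (1 + θ)) ⟨by positivity, (div_le_one hθ1).2 (by linarith)⟩
  have hcleared : (1 + θ) ^ 2 * (D + a) ≤ (1 - θ ^ 2) * ((1 + θ) * D + a) :=
    calc (1 + θ) ^ 2 * (D + a)
        ≤ (1 + θ) ^ 2 * ((1 - θ ^ 2) * (1 / (1 + θ) * D + (1 / (1 + θ)) ^ 2 * a)) :=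
          mul_le_mul_of_nonneg_left ht (sq_nonneg _)
      _ = (1 - θ ^ 2) * ((1 + θ) * D + a) := by field_simp
  have hfactored : θ * (1 + θ) * ((1 + θ) * D + 2 * a) ≤ 0 := by linarith
  exact nonpos_of_mul_nonpos_right hfactored (by positivity)

lemma one_add_mul_add_two_mul_nonpos {D a θ : ℝ} (hθ : 0 ≤ θ)
    (h : ∀ t ∈ Icc (0 : ℝ) 1, D + a ≤ (1 - θ ^ 2) * (t * D + t ^ 2 * a)) :
    (1 + θ) * D + 2 * a ≤ 0 := by
  rcases hθ.eq_or_lt with rfl | hθ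
  · simpa using add_two_mul_nonpos_of_forall_le (by simpa using h)
  · exact one_add_mul_add_two_mul_nonpos_of_pos hθ h

theorem inexact_direction_Delta_bound_general {N : ℕ} (c₂ η : ℝ) (S : ℕ)
    (hη0 : 0 ≤ η) (hη1 : η < 1)
    (H : EuclideanSpace ℝ (Fin N) →L[ℝ] EuclideanSpace ℝ (Fin N))
    (hHlb : ∀ v, c₂ * ‖v‖ ^ 2 ≤ ⟪v, H v⟫)
    (f : EuclideanSpace ℝ (Fin N) → ℝ)
    (Ψ : EuclideanSpace ℝ (Fin N) → ℝ) (hΨ : ConvexOn ℝ Set.univ Ψ)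
    (x : EuclideanSpace ℝ (Fin N))
    (Q : EuclideanSpace ℝ (Fin N) → ℝ)
    (hQ : ∀ q, Q q = ⟪gradient f x, q⟫ + (1 / 2) * ⟪q, H q⟫ + Ψ (x + q) - Ψ x)
    (Qstar : ℝ) (hlb : ∀ q, Qstar ≤ Q q)
    (p : EuclideanSpace ℝ (Fin N))
    (hinexact : Q p - Qstar ≤ η ^ S * (Q 0 - Qstar)) :
    ⟪gradient f x, p⟫ + Ψ (x + p) - Ψ x
      ≤ -(c₂ * ‖p‖ ^ 2) / (1 + Real.sqrt (η ^ S)) := by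
  have hQ' : Q = quadModel (gradient f x) H Ψ x := funext hQ
  set D := ⟪gradient f x, p⟫ + Ψ (x + p) - Ψ x
  set a := ⟪p, H p⟫ / 2 with ha
  have hθsq : Real.sqrt (η ^ S) ^ 2 = η ^ S := Real.sq_sqrt (pow_nonneg hη0 S)
  have hε1 : 0 ≤ 1 - η ^ S := sub_nonneg.2 (pow_le_one₀ hη0 hη1.le)
  have hQp : Q p ≤ (1 - η ^ S) * Qstar := by
    have hQ0 : Q 0 = 0 := by simp [hQ]
    rw [hQ0] at hinexact
    linarith
  have hparabola : ∀ t ∈ Icc (0 : ℝ) 1,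
      D + a ≤ (1 - Real.sqrt (η ^ S) ^ 2) * (t * D + t ^ 2 * a) := fun t ht ↦ by
    have hQt : Q (t • p) ≤ t * D + t ^ 2 * a := hQ' ▸ quadModel_smul_le _ H hΨ x p ht.1 ht.2
    rw [hθsq]
    calc D + a = Q p := by rw [hQ]; ring
      _ ≤ (1 - η ^ S) * Qstar := hQp
      _ ≤ (1 - η ^ S) * Q (t • p) := mul_le_mul_of_nonneg_left (hlb _) hε1
      _ ≤ (1 - η ^ S) * (t * D + t ^ 2 * a) := mul_le_mul_of_nonneg_left hQt hε1
  have hca : c₂ * ‖p‖ ^ 2 ≤ 2 * a := by linarith [hHlb p, ha]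
  rw [le_div_iff₀ (by positivity)]
  linarith [one_add_mul_add_two_mul_nonpos (Real.sqrt_nonneg _) hparabola]

/-- first claim of Lemma 2 of the paper: if the approximate
subproblem solution `p` satisfies `Q(p) − Q* ≤ η^S (Q(0) − Q*)` and `H ⪰ c₂ I`, then
`Δ = ⟨∇f(x), p⟩ + Ψ(x + p) − Ψ(x)` satisfies `Δ ≤ −c₂‖p‖²/(1 + η^{S/2})`. -/
theorem inexact_direction_Delta_bound {N : ℕ} (c₂ η : ℝ) (S : ℕ)
    (hc₂ : 0 < c₂) (hη0 : 0 ≤ η) (hη1 : η < 1) (hS : 1 ≤ S)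
    (H : EuclideanSpace ℝ (Fin N) →L[ℝ] EuclideanSpace ℝ (Fin N))
    (hHsymm : ∀ v w, ⟪H v, w⟫ = ⟪v, H w⟫)
    (hHlb : ∀ v, c₂ * ‖v‖ ^ 2 ≤ ⟪v, H v⟫)
    (f : EuclideanSpace ℝ (Fin N) → ℝ) (hf : Differentiable ℝ f)
    (Ψ : EuclideanSpace ℝ (Fin N) → ℝ) (hΨ : ConvexOn ℝ Set.univ Ψ)
    (x : EuclideanSpace ℝ (Fin N))
    (Q : EuclideanSpace ℝ (Fin N) → ℝ)
    (hQ : ∀ q, Q q = ⟪gradient f x, q⟫ + (1 / 2) * ⟪q, H q⟫ + Ψ (x + q) - Ψ x)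
    (Qstar : ℝ) (hatt : ∃ qmin, Q qmin = Qstar) (hlb : ∀ q, Qstar ≤ Q q)
    (p : EuclideanSpace ℝ (Fin N))
    (hinexact : Q p - Qstar ≤ η ^ S * (Q 0 - Qstar)) :
    ⟪gradient f x, p⟫ + Ψ (x + p) - Ψ x
      ≤ -(c₂ * ‖p‖ ^ 2) / (1 + Real.sqrt (η ^ S)) :=
  inexact_direction_Delta_bound_general c₂ η S hη0 hη1 H hHlb f Ψ hΨ x Q hQ Qstar hlb p hinexact
end

section
/- Let f : ℝ^N → ℝ be differentiable with L-Lipschitz gradient (L > 0), Ψ : ℝ^N → ℝ convex, F = f + Ψ, and σ₁ ∈ (0,1). Suppose x, p ∈ ℝ^N and the quantity Δ = ⟨∇f(x), p⟩ + Ψ(x + p) − Ψ(x) satisfies Δ ≤ − c₂‖p‖²/(1 + η^{S/2}) for constants c₂ > 0, η ∈ [0,1), integer S ≥ 1. Then for every λ ∈ (0, 1] with λ ≤ 2(1 − σ₁)c₂ / (L(1 + η^{S/2})), the Armijo condition F(x + λp) ≤ F(x) + λσ₁Δ holds. Consequently, backtracking from λ = 1 with reduction factor θ ∈ (0,1) terminates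 in finitely many steps and returns a step size λ ≥ min{1, 2θ(1 − σ₁)c₂/(L(1 + η^{S/2}))}. -/
/-!
Along the segment `t ↦ x + t • p`, the Lipschitz gradient bounds `f` by its quadratic model
`f x + t ⟪∇f x, p⟫ + L t² ‖p‖² / 2`, while convexity bounds `Ψ` by its chord. Hence
`F (x + λ • p) ≤ F x + λ Δ + L λ² ‖p‖² / 2`, and `Δ ≤ -c ‖p‖²` turns this into the Armijo condition
as soon as `λ L ≤ 2 (1 - σ₁) c`. Every rejected step thus exceeds this threshold, and the accepted
step is either `1` or `θ` times the last rejected one.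
-/

open scoped RealInnerProductSpace NNReal

section Descent

variable {E : Type*} [NormedAddCommGroup E] [InnerProductSpace ℝ E]

lemma LipschitzWith.inner_add_smul_sub_le {K : ℝ≥0} {g : E → E} (hg : LipschitzWith K g)
    (x v : E) {t : ℝ} (ht : 0 ≤ t) :
    ⟪g (x + t • v) - g x, v⟫ ≤ K * t * ‖v‖ ^ 2 :=
  calc ⟪g (x + t • v) - g x, v⟫ ≤ ‖g (x + t • v) - g x‖ * ‖v‖ := real_inner_le_norm _ _
    _ ≤ K * ‖t • v‖ * ‖v‖ := by
        gcongr
        simpa [dist_eq_norm] using hg.dist_le_mul (x + t • v) x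
    _ = K * t * ‖v‖ ^ 2 := by rw [norm_smul, Real.norm_of_nonneg ht]; ring

variable [CompleteSpace E]

lemma DifferentiableAt.hasDerivAt_comp_add_smul {f : E → ℝ} {x v : E} {t : ℝ}
    (hf : DifferentiableAt ℝ f (x + t • v)) :
    HasDerivAt (fun s : ℝ => f (x + s • v)) ⟪gradient f (x + t • v), v⟫ t := by
  have hline : HasDerivAt (fun s : ℝ => x + s • v) v t := by
    simpa using ((hasDerivAt_id t).smul_const v).const_add x
  have h := hf.hasFDerivAt.comp_hasDerivAt t hline
  rwa [← inner_gradient_left] at h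

lemma image_add_le_of_lipschitzWith_gradient {K : ℝ≥0} {f : E → ℝ} (hf : Differentiable ℝ f)
    (hlip : LipschitzWith K (gradient f)) (x v : E) :
    f (x + v) ≤ f x + ⟪gradient f x, v⟫ + K / 2 * ‖v‖ ^ 2 := by
  have hφ (t : ℝ) := (hf (x + t • v)).hasDerivAt_comp_add_smul
  have hmodel (t : ℝ) :
      HasDerivAt (fun s : ℝ => f x + s * ⟪gradient f x, v⟫ + K / 2 * s ^ 2 * ‖v‖ ^ 2)
        (⟪gradient f x, v⟫ + K * t * ‖v‖ ^ 2) t := by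
    have h := (((hasDerivAt_id' t).mul_const ⟪gradient f x, v⟫).const_add (f x)).add
      (((hasDerivAt_pow 2 t).const_mul (K / 2 : ℝ)).mul_const (‖v‖ ^ 2))
    exact h.congr_deriv (by push_cast; ring)
  have hslope (t : ℝ) (ht : 0 ≤ t) :
      ⟪gradient f (x + t • v), v⟫ ≤ ⟪gradient f x, v⟫ + K * t * ‖v‖ ^ 2 := by
    have := hlip.inner_add_smul_sub_le x v ht
    rw [inner_sub_left] at this
    linarith
  have := image_le_of_deriv_right_le_deriv_boundary
    (fun t _ => (hφ t).continuousAt.continuousWithinAt) (fun t _ => (hφ t).hasDerivWithinAt)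
    (by simp) (fun t _ => (hmodel t).continuousAt.continuousWithinAt)
    (fun t _ => (hmodel t).hasDerivWithinAt) (fun t ht => hslope t ht.1)
    (Set.right_mem_Icc.mpr zero_le_one)
  simpa using this

end Descent

lemma ConvexOn.image_add_smul_le {E : Type*} [AddCommGroup E] [Module ℝ E] {s : Set E}
    {Ψ : E → ℝ} (hΨ : ConvexOn ℝ s Ψ) {x p : E} (hx : x ∈ s) (hxp : x + p ∈ s) {t : ℝ}
    (ht₀ : 0 ≤ t) (ht₁ : t ≤ 1) :
    Ψ (x + t • p) ≤ Ψ x + t * (Ψ (x + p) - Ψ x) := by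
  have h := hΨ.2 hx hxp (sub_nonneg.mpr ht₁) ht₀ (sub_add_cancel 1 t)
  rw [show (1 - t) • x + t • (x + p) = x + t • p by module, smul_eq_mul, smul_eq_mul] at h
  linarith

lemma armijo_of_mul_le {E : Type*} [NormedAddCommGroup E] [InnerProductSpace ℝ E]
    [CompleteSpace E] {K : ℝ≥0} {f Ψ : E → ℝ} (hf : Differentiable ℝ f)
    (hlip : LipschitzWith K (gradient f)) (hΨ : ConvexOn ℝ Set.univ Ψ) {σ₁ c : ℝ}
    (hσ₁ : σ₁ ≤ 1) {x p : E} {Δ : ℝ} (hΔdef : Δ = ⟪gradient f x, p⟫ + Ψ (x + p) - Ψ x)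
    (hΔ : Δ ≤ -(c * ‖p‖ ^ 2)) {t : ℝ} (ht₀ : 0 < t) (ht₁ : t ≤ 1)
    (htK : t * K ≤ 2 * (1 - σ₁) * c) :
    f (x + t • p) + Ψ (x + t • p) ≤ f x + Ψ x + t * σ₁ * Δ := by
  have hf_model := image_add_le_of_lipschitzWith_gradient hf hlip x (t • p)
  rw [inner_smul_right, norm_smul, Real.norm_of_nonneg ht₀.le] at hf_model
  have hΨ_chord := hΨ.image_add_smul_le (Set.mem_univ x) (Set.mem_univ (x + p)) ht₀.le ht₁
  have hdecrease : t * (1 - σ₁) * Δ ≤ -(t * (1 - σ₁) * c * ‖p‖ ^ 2) := by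
    have := mul_le_mul_of_nonneg_left hΔ (mul_nonneg ht₀.le (sub_nonneg.mpr hσ₁))
    linarith
  have hquadratic : t * K * (t * ‖p‖ ^ 2) ≤ 2 * (1 - σ₁) * c * (t * ‖p‖ ^ 2) :=
    mul_le_mul_of_nonneg_right htK (by positivity)
  nlinarith

section Backtracking

variable {P : ℝ → Prop} {θ B : ℝ}

lemma exists_pow_of_forall_le (hB : 0 < B) (hθ₀ : 0 < θ) (hθ₁ : θ < 1)
    (hP : ∀ t, 0 < t → t ≤ 1 → t ≤ B → P t) : ∃ i : ℕ, P (θ ^ i) := by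
  obtain ⟨i, hi⟩ := exists_pow_lt_of_lt_one hB hθ₁
  exact ⟨i, hP _ (pow_pos hθ₀ i) (pow_le_one₀ hθ₀.le hθ₁.le) hi.le⟩

lemma min_le_pow_of_forall_lt_not (hθ₀ : 0 < θ) (hθ₁ : θ ≤ 1)
    (hP : ∀ t, 0 < t → t ≤ 1 → t ≤ B → P t) {i : ℕ} (hrej : ∀ j < i, ¬ P (θ ^ j)) :
    min 1 (θ * B) ≤ θ ^ i := by
  rcases i with _ | k
  · simp
  · have hk : B < θ ^ k := by
      by_contra! h
      exact hrej k k.lt_succ_self (hP _ (pow_pos hθ₀ k) (pow_le_one₀ hθ₀.le hθ₁) h)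
    calc min 1 (θ * B) ≤ θ * B := min_le_right _ _
      _ ≤ θ * θ ^ k := by gcongr
      _ = θ ^ (k + 1) := (pow_succ' θ k).symm

end Backtracking

theorem armijo_backtracking_bound_general {N : ℕ} (L σ₁ c₂ η θ : ℝ) (S : ℕ)
    (hL : 0 < L) (hσ₁' : σ₁ < 1) (hc₂ : 0 < c₂)
    (hθ0 : 0 < θ) (hθ1 : θ < 1)
    (f : EuclideanSpace ℝ (Fin N) → ℝ) (hf : Differentiable ℝ f)
    (hlip : LipschitzWith (Real.toNNReal L) (fun z => gradient f z))
    (Ψ : EuclideanSpace ℝ (Fin N) → ℝ) (hΨ : ConvexOn ℝ Set.univ Ψ)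
    (F : EuclideanSpace ℝ (Fin N) → ℝ) (hF : ∀ z, F z = f z + Ψ z)
    (x p : EuclideanSpace ℝ (Fin N)) (Δ : ℝ)
    (hΔdef : Δ = ⟪gradient f x, p⟫ + Ψ (x + p) - Ψ x)
    (hΔ : Δ ≤ -(c₂ * ‖p‖ ^ 2) / (1 + Real.sqrt (η ^ S))) :
    (∀ lam : ℝ, 0 < lam → lam ≤ 1 →
        lam ≤ 2 * (1 - σ₁) * c₂ / (L * (1 + Real.sqrt (η ^ S))) →
        F (x + lam • p) ≤ F x + lam * σ₁ * Δ) ∧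
    (∃ i : ℕ, F (x + θ ^ i • p) ≤ F x + θ ^ i * σ₁ * Δ) ∧
    (∀ i : ℕ, (∀ j < i, ¬ F (x + θ ^ j • p) ≤ F x + θ ^ j * σ₁ * Δ) →
        F (x + θ ^ i • p) ≤ F x + θ ^ i * σ₁ * Δ →
        θ ^ i ≥ min 1 (2 * θ * (1 - σ₁) * c₂ / (L * (1 + Real.sqrt (η ^ S))))) := by
  have hΔc : Δ ≤ -(c₂ / (1 + Real.sqrt (η ^ S)) * ‖p‖ ^ 2) := by convert hΔ using 1; ring
  have hB : 2 * (1 - σ₁) * c₂ / (L * (1 + Real.sqrt (η ^ S)))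
      = 2 * (1 - σ₁) * (c₂ / (1 + Real.sqrt (η ^ S))) / L := by
    rw [mul_comm L, ← div_div]; ring
  have armijo : ∀ lam : ℝ, 0 < lam → lam ≤ 1 →
      lam ≤ 2 * (1 - σ₁) * c₂ / (L * (1 + Real.sqrt (η ^ S))) →
      F (x + lam • p) ≤ F x + lam * σ₁ * Δ := by
    intro lam hlam₀ hlam₁ hlamB
    rw [hB, le_div_iff₀ hL, ← Real.coe_toNNReal L hL.le] at hlamB
    rw [hF, hF]
    exact armijo_of_mul_le hf hlip hΨ hσ₁'.le hΔdef hΔc hlam₀ hlam₁ hlamB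
  have hBpos : 0 < 2 * (1 - σ₁) * c₂ / (L * (1 + Real.sqrt (η ^ S))) := by
    have := sub_pos.mpr hσ₁'; positivity
  refine ⟨armijo, exists_pow_of_forall_le hBpos hθ0 hθ1 armijo, fun i hrej _ => ?_⟩
  rw [show 2 * θ * (1 - σ₁) * c₂ / (L * (1 + Real.sqrt (η ^ S)))
      = θ * (2 * (1 - σ₁) * c₂ / (L * (1 + Real.sqrt (η ^ S)))) by ring]
  exact min_le_pow_of_forall_lt_not hθ0 hθ1.le armijo hrej

/-- step-size lower bound of Lemma 2 of the paper: if
`Δ ≤ −c₂‖p‖²/(1 + η^{S/2})`, then (a) every `λ ∈ (0,1]` with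
`λ ≤ 2(1 − σ₁)c₂/(L(1 + η^{S/2}))` satisfies the Armijo condition
`F(x + λp) ≤ F(x) + λσ₁Δ`; (b) some step of the form `θ^i` is accepted; and (c) the
first accepted step `θ^i` (all earlier steps rejected) satisfies
`θ^i ≥ min{1, 2θ(1 − σ₁)c₂/(L(1 + η^{S/2}))}`. -/
theorem armijo_backtracking_bound {N : ℕ} (L σ₁ c₂ η θ : ℝ) (S : ℕ)
    (hL : 0 < L) (hσ₁ : 0 < σ₁) (hσ₁' : σ₁ < 1) (hc₂ : 0 < c₂)
    (hη0 : 0 ≤ η) (hη1 : η < 1) (hS : 1 ≤ S) (hθ0 : 0 < θ) (hθ1 : θ < 1)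
    (f : EuclideanSpace ℝ (Fin N) → ℝ) (hf : Differentiable ℝ f)
    (hlip : LipschitzWith (Real.toNNReal L) (fun z => gradient f z))
    (Ψ : EuclideanSpace ℝ (Fin N) → ℝ) (hΨ : ConvexOn ℝ Set.univ Ψ)
    (F : EuclideanSpace ℝ (Fin N) → ℝ) (hF : ∀ z, F z = f z + Ψ z)
    (x p : EuclideanSpace ℝ (Fin N)) (Δ : ℝ)
    (hΔdef : Δ = ⟪gradient f x, p⟫ + Ψ (x + p) - Ψ x)
    (hΔ : Δ ≤ -(c₂ * ‖p‖ ^ 2) / (1 + Real.sqrt (η ^ S))) :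
    (∀ lam : ℝ, 0 < lam → lam ≤ 1 →
        lam ≤ 2 * (1 - σ₁) * c₂ / (L * (1 + Real.sqrt (η ^ S))) →
        F (x + lam • p) ≤ F x + lam * σ₁ * Δ) ∧
    (∃ i : ℕ, F (x + θ ^ i • p) ≤ F x + θ ^ i * σ₁ * Δ) ∧
    (∀ i : ℕ, (∀ j < i, ¬ F (x + θ ^ j • p) ≤ F x + θ ^ j * σ₁ * Δ) →
        F (x + θ ^ i • p) ≤ F x + θ ^ i * σ₁ * Δ →
        θ ^ i ≥ min 1 (2 * θ * (1 - σ₁) * c₂ / (L * (1 + Real.sqrt (η ^ S))))) :=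
  armijo_backtracking_bound_general L σ₁ c₂ η θ S hL hσ₁' hc₂ hθ0 hθ1 f hf hlip Ψ hΨ F hF x p Δ
    hΔdef hΔ
end

section
/- Under the DPLBFGS iterate assumptions (without convexity of f), assume F is bounded below with infimum F*, and for each t let G_t be the unique minimizer of p ↦ ⟨∇f(x^t), p⟩ + ‖p‖²/2 + Ψ(x^t + p). Then for every t ≥ 0, min_{0 ≤ i ≤ t} ‖G_i‖² ≤ ((F(x⁰) − F*)/(σ₁ (t+1))) · M² (1 + 1/c₂ + √(1 − 2/M + 1/c₂²))² / (2 c₂ (1 − η^S) min_{0 ≤ i ≤ t} λ_i); i.e., the proximal-gradient residual norm tends to zero at rate O(1/√t). -/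
/-!
Moving from `x^t` along `α G_t` with `α = 1 / max 1 M`, convexity of `Ψ` and the prox
optimality of `G_t` (which gives `⟨∇f, G_t⟩ + Ψ(x^t + G_t) - Ψ(x^t) ≤ -‖G_t‖²`) show that the
quadratic model has minimum value `Q*_t ≤ -‖G_t‖² / (2 max 1 M)`, and the paper's constant
dominates `2 max 1 M`. By inexactness `Δ_t ≤ (1 - η^S) Q*_t`, so every Armijo step decreases
`F` by at least a fixed multiple of `λ_min ‖G_t‖²`; telescoping against `F*` bounds the sum of
the `‖G_i‖²`, hence their minimum.
-/

open scoped RealInnerProductSpace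
open Set Filter Topology Finset

theorem ConvexOn.add_sq_norm_le_apply_zero_of_isMinOn {E : Type*} [NormedAddCommGroup E]
    [NormedSpace ℝ E] {h : E → ℝ} (hh : ConvexOn ℝ univ h) {G : E}
    (hG : IsMinOn (fun q => ‖q‖ ^ 2 / 2 + h q) univ G) :
    h G + ‖G‖ ^ 2 ≤ h 0 := by
  -- Comparing `G` with `(1 - s) • G` gives `h G + ‖G‖² - h 0 ≤ s ‖G‖² / 2`; let `s → 0⁺`.
  have hsmall : ∀ s ∈ Ioc (0 : ℝ) 1, h G + ‖G‖ ^ 2 - h 0 ≤ s * (‖G‖ ^ 2 / 2) := by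
    rintro s ⟨hs0, hs1⟩
    have hconv : h ((1 - s) • G) ≤ s * h 0 + (1 - s) * h G := by
      simpa using hh.2 (mem_univ 0) (mem_univ G) hs0.le (sub_nonneg.2 hs1) (by ring)
    have hmin : ‖G‖ ^ 2 / 2 + h G ≤ ‖(1 - s) • G‖ ^ 2 / 2 + h ((1 - s) • G) :=
      isMinOn_univ_iff.1 hG _
    rw [norm_smul, Real.norm_of_nonneg (sub_nonneg.2 hs1)] at hmin
    have : s * (h G + ‖G‖ ^ 2 - h 0) ≤ s * (s * (‖G‖ ^ 2 / 2)) := by nlinarith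
    exact le_of_mul_le_mul_left this hs0
  have hlim : Tendsto (fun s : ℝ => s * (‖G‖ ^ 2 / 2)) (𝓝[>] 0) (𝓝 0) :=
    ((continuous_id.mul continuous_const).tendsto' 0 0 (by simp)).mono_left nhdsWithin_le_nhds
  have hnonpos : h G + ‖G‖ ^ 2 - h 0 ≤ 0 :=
    ge_of_tendsto hlim (eventually_of_mem (Ioc_mem_nhdsGT one_pos) hsmall)
  linarith

theorem sq_norm_div_two_mul_max_le_neg_model_min {E : Type*} [NormedAddCommGroup E]
    [InnerProductSpace ℝ E] {Ψ : E → ℝ} (hΨ : ConvexOn ℝ univ Ψ) {H : E →L[ℝ] E} {M : ℝ}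
    (hHM : ‖H‖ ≤ M) {g x G : E} {qstar : ℝ}
    (hq : ∀ q, qstar ≤ ⟪g, q⟫ + 1 / 2 * ⟪q, H q⟫ + Ψ (x + q) - Ψ x)
    (hG : ∀ q, ⟪g, G⟫ + ‖G‖ ^ 2 / 2 + Ψ (x + G) ≤ ⟪g, q⟫ + ‖q‖ ^ 2 / 2 + Ψ (x + q)) :
    ‖G‖ ^ 2 / (2 * max 1 M) ≤ -qstar := by
  set h : E → ℝ := fun q => ⟪g, q⟫ + Ψ (x + q)
  have hh : ConvexOn ℝ univ h :=
    ((innerₗ E g).convexOn convex_univ).add (hΨ.translate_right x)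
  have hprox : h G + ‖G‖ ^ 2 ≤ h 0 :=
    hh.add_sq_norm_le_apply_zero_of_isMinOn <| isMinOn_univ_iff.2 fun q => by
      simp only [h]; linarith [hG q]
  set α : ℝ := (max 1 M)⁻¹
  have hα0 : 0 < α := by positivity
  have hα1 : α ≤ 1 := inv_le_one_of_one_le₀ (le_max_left 1 M)
  have hαM : α * M ≤ 1 := by
    rw [inv_mul_le_iff₀ (by positivity), mul_one]; exact le_max_right 1 M
  have hconv : h (α • G) ≤ (1 - α) * h 0 + α * h G := by
    simpa only [smul_zero, zero_add, smul_eq_mul] using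
      hh.2 (mem_univ 0) (mem_univ G) (sub_nonneg.2 hα1) hα0.le (by ring)
  have hquad : ⟪α • G, H (α • G)⟫ ≤ α * ‖G‖ ^ 2 :=
    calc ⟪α • G, H (α • G)⟫ ≤ ‖α • G‖ * (‖H‖ * ‖α • G‖) :=
          (real_inner_le_norm _ _).trans (by gcongr; exact H.le_opNorm _)
      _ = α * (α * ‖H‖) * ‖G‖ ^ 2 := by rw [norm_smul, Real.norm_of_nonneg hα0.le]; ring
      _ ≤ α * 1 * ‖G‖ ^ 2 := by
          gcongr; exact (mul_le_mul_of_nonneg_left hHM hα0.le).trans hαM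
      _ = α * ‖G‖ ^ 2 := by ring
  have hmodel : qstar ≤ α * (h G - h 0) + 1 / 2 * (α * ‖G‖ ^ 2) :=
    calc qstar ≤ h (α • G) - h 0 + 1 / 2 * ⟪α • G, H (α • G)⟫ :=
          (hq _).trans_eq (by simp only [h, inner_zero_right, add_zero]; ring)
      _ ≤ α * (h G - h 0) + 1 / 2 * (α * ‖G‖ ^ 2) := by gcongr; linarith
  calc ‖G‖ ^ 2 / (2 * max 1 M) = α / 2 * ‖G‖ ^ 2 := by simp only [α]; field_simp
    _ ≤ -qstar := by nlinarith

theorem two_mul_max_one_le_sq_mul_sq_div {c M : ℝ} (hc : 0 < c) (hcM : c ≤ M) :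
    2 * max 1 M ≤ M ^ 2 * (1 + 1 / c + √(1 - 2 / M + 1 / c ^ 2)) ^ 2 / (2 * c) := by
  have hM : 0 < M := hc.trans_le hcM
  have hinv : 1 / M ≤ 1 / c := one_div_le_one_div_of_le hc hcM
  have habs : |1 - 1 / M| ≤ √(1 - 2 / M + 1 / c ^ 2) := by
    apply Real.abs_le_sqrt
    have : (1 / M) ^ 2 ≤ 1 / c ^ 2 := by rw [← one_div_pow]; gcongr
    linarith [show (1 - 1 / M) ^ 2 = 1 - 2 / M + (1 / M) ^ 2 by ring]
  set T := 1 + 1 / c + √(1 - 2 / M + 1 / c ^ 2)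
  have hMT : 2 * max 1 M ≤ M * T := by
    rcases le_total 1 M with h1 | h1
    · rw [max_eq_right h1]
      nlinarith [le_abs_self (1 - 1 / M)]
    · have hT : 2 / M ≤ T := by
        linarith [neg_abs_le (1 - 1 / M), show 2 / M = 2 * (1 / M) by ring]
      calc 2 * max 1 M = M * (2 / M) := by rw [max_eq_left h1]; field_simp
        _ ≤ M * T := by gcongr
  rw [le_div_iff₀ (by positivity)]
  have hmax : c ≤ max 1 M := hcM.trans (le_max_right 1 M)
  nlinarith [le_max_left 1 M]

theorem inf'_range_le_div_of_forall_mul_le_sub {a e : ℕ → ℝ} {c b : ℝ} {t : ℕ} (hc : 0 < c)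
    (hdec : ∀ i ∈ range (t + 1), c * e i ≤ a i - a (i + 1)) (hb : b ≤ a (t + 1)) :
    (range (t + 1)).inf' nonempty_range_add_one e ≤ (a 0 - b) / (c * (t + 1)) := by
  have hmin : (t + 1 : ℝ) * (range (t + 1)).inf' nonempty_range_add_one e ≤
      ∑ i ∈ range (t + 1), e i := by
    simpa using card_nsmul_le_sum _ e ((range (t + 1)).inf' nonempty_range_add_one e)
      fun i hi => inf'_le e hi
  have hsum : c * ∑ i ∈ range (t + 1), e i ≤ a 0 - a (t + 1) := by
    rw [mul_sum, ← sum_range_sub' a]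
    exact sum_le_sum hdec
  rw [le_div_iff₀ (by positivity)]
  nlinarith

/-- Theorem 4 of the paper: under the DPLBFGS iterate assumptions
(without convexity of `f`), with `F` bounded below with infimum `F*` and `G_t` the
unique minimizer of `p ↦ ⟨∇f(x^t), p⟩ + ‖p‖²/2 + Ψ(x^t + p)`, the proximal-gradient
residual satisfies, for all `t`,
`min_{0≤i≤t} ‖G_i‖² ≤ ((F(x⁰) − F*)/(σ₁(t+1))) · M²(1 + 1/c₂ + √(1 − 2/M + 1/c₂²))²
/ (2c₂(1 − η^S) min_{0≤i≤t} λ_i)`. -/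
theorem dplbfgs_nonconvex_rate {N : ℕ}
    (L σ₁ η c₂ M lamBar : ℝ) (S : ℕ)
    (hσ₁ : 0 < σ₁)
    (hη0 : 0 ≤ η) (hη1 : η < 1) (hS : 1 ≤ S)
    (hc₂ : 0 < c₂) (hc₂M : c₂ ≤ M) (hlamBar : 0 < lamBar)
    (f : EuclideanSpace ℝ (Fin N) → ℝ)
    (Ψ : EuclideanSpace ℝ (Fin N) → ℝ) (hΨ : ConvexOn ℝ Set.univ Ψ)
    (F : EuclideanSpace ℝ (Fin N) → ℝ)
    (x p : ℕ → EuclideanSpace ℝ (Fin N))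
    (H : ℕ → (EuclideanSpace ℝ (Fin N) →L[ℝ] EuclideanSpace ℝ (Fin N)))
    (lam : ℕ → ℝ)
    (hHlb : ∀ t v, c₂ * ‖v‖ ^ 2 ≤ ⟪v, H t v⟫)
    (hHub : ∀ t, ‖H t‖ ≤ M)
    (hlam : ∀ t, lamBar ≤ lam t ∧ lam t ≤ 1)
    (Q : ℕ → EuclideanSpace ℝ (Fin N) → ℝ)
    (hQ : ∀ t q, Q t q = ⟪gradient f (x t), q⟫ + (1 / 2) * ⟪q, H t q⟫
      + Ψ (x t + q) - Ψ (x t))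
    (Qstar : ℕ → ℝ)
    (hQstar : ∀ t, (∀ q, Qstar t ≤ Q t q) ∧ ∃ q, Q t q = Qstar t)
    (hinexact : ∀ t, Q t (p t) - Qstar t ≤ η ^ S * (0 - Qstar t))
    (harmijo : ∀ t, F (x (t + 1)) ≤ F (x t)
      + lam t * σ₁ * (⟪gradient f (x t), p t⟫ + Ψ (x t + p t) - Ψ (x t)))
    (Fstar : ℝ) (hFstar : IsGLB (Set.range F) Fstar)
    (G : ℕ → EuclideanSpace ℝ (Fin N))
    (hG : ∀ t, (∀ q, ⟪gradient f (x t), G t⟫ + ‖G t‖ ^ 2 / 2 + Ψ (x t + G t)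
          ≤ ⟪gradient f (x t), q⟫ + ‖q‖ ^ 2 / 2 + Ψ (x t + q)) ∧
        (∀ q, (∀ r, ⟪gradient f (x t), q⟫ + ‖q‖ ^ 2 / 2 + Ψ (x t + q)
            ≤ ⟪gradient f (x t), r⟫ + ‖r‖ ^ 2 / 2 + Ψ (x t + r)) → q = G t)) :
    ∀ t : ℕ, (Finset.range (t + 1)).inf' (by simp) (fun i => ‖G i‖ ^ 2)
      ≤ (F (x 0) - Fstar) / (σ₁ * (t + 1))
        * (M ^ 2 * (1 + 1 / c₂ + Real.sqrt (1 - 2 / M + 1 / c₂ ^ 2)) ^ 2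
          / (2 * c₂ * (1 - η ^ S) * (Finset.range (t + 1)).inf' (by simp) lam)) := by
  intro t
  set lmin := (range (t + 1)).inf' nonempty_range_add_one lam
  have hlmin : 0 < lmin := hlamBar.trans_le (le_inf' _ _ fun i _ => (hlam i).1)
  have hηS : 0 < 1 - η ^ S := sub_pos.2 (pow_lt_one₀ hη0 hη1 (by omega))
  set K := M ^ 2 * (1 + 1 / c₂ + √(1 - 2 / M + 1 / c₂ ^ 2)) ^ 2 / (2 * c₂)
  have hK : 2 * max 1 M ≤ K := two_mul_max_one_le_sq_mul_sq_div hc₂ hc₂M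
  have hKpos : 0 < K := by linarith [le_max_left 1 M]
  have hmodel : ∀ i, ‖G i‖ ^ 2 / K ≤ -Qstar i := fun i =>
    (div_le_div_of_nonneg_left (sq_nonneg _) (by positivity) hK).trans
      (sq_norm_div_two_mul_max_le_neg_model_min hΨ (hHub i)
        (fun q => ((hQstar i).1 q).trans_eq (hQ i q)) (hG i).1)
  have hdescent : ∀ i, (1 - η ^ S) * -Qstar i
      ≤ -(⟪gradient f (x i), p i⟫ + Ψ (x i + p i) - Ψ (x i)) := fun i => by
    have hHp : 0 ≤ ⟪p i, H i (p i)⟫ :=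
      (by positivity : 0 ≤ c₂ * ‖p i‖ ^ 2).trans (hHlb i (p i))
    linarith [hinexact i, hQ i (p i)]
  have hdec : ∀ i ∈ range (t + 1),
      σ₁ * (1 - η ^ S) * lmin / K * ‖G i‖ ^ 2 ≤ F (x i) - F (x (i + 1)) := fun i hi => by
    have hlam0 : 0 ≤ lam i := hlmin.le.trans (inf'_le lam hi)
    calc σ₁ * (1 - η ^ S) * lmin / K * ‖G i‖ ^ 2
        = lmin * σ₁ * ((1 - η ^ S) * (‖G i‖ ^ 2 / K)) := by ring
      _ ≤ lam i * σ₁ * ((1 - η ^ S) * -Qstar i) := by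
        gcongr
        exacts [inf'_le lam hi, hmodel i]
      _ ≤ lam i * σ₁ * -(⟪gradient f (x i), p i⟫ + Ψ (x i + p i) - Ψ (x i)) := by
        gcongr; exact hdescent i
      _ ≤ F (x i) - F (x (i + 1)) := by linarith [harmijo i]
  calc (range (t + 1)).inf' _ (fun i => ‖G i‖ ^ 2)
      ≤ (F (x 0) - Fstar) / (σ₁ * (1 - η ^ S) * lmin / K * (t + 1)) :=
        inf'_range_le_div_of_forall_mul_le_sub (by positivity) hdec
          (hFstar.1 (Set.mem_range_self _))
    _ = _ := by simp only [K]; field_simp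
end

section
/- In the primal–dual ERM setting, assume in addition that ξ* is σ-strongly convex for some σ > 0. Let ε > 0 and let α ∈ ℝ^n satisfy D(α) − D* ≤ ε. Then the recovered primal point w(α) = ∇g*(X α) satisfies P(w(α)) − P* ≤ ε (1 + L/σ). -/
/-!
Write `F = g* ∘ X`, so that `Xᵀ w(α) = ∇F(α)`, and let `α⋆` be a dual minimiser. Optimality of `α⋆`
and the descent lemma for `F` make `∇F(α⋆)` a subgradient of `ξ*` at `-α⋆`, which strong convexity
upgrades to a quadratic minorant of curvature `σ`. Through Fenchel–Young this minorant bounds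
`ξ(∇F(α)) + ξ*(-α⋆)`, while `w(α) = ∇g*(Xα)` makes Fenchel–Young tight for `g` at `(w(α), Xα)`;
with the descent lemma once more,
`P(w(α)) + D⋆ ≤ L/2 ‖α - α⋆‖² + ‖∇F(α) - ∇F(α⋆)‖² / 2σ`.
The same minorant and cocoercivity of `∇F` give
`D(α) - D⋆ ≥ σ/2 ‖α - α⋆‖² + ‖∇F(α) - ∇F(α⋆)‖² / 2L`, so the right-hand side above is at most
`(L/σ) ε`, and weak duality `P⋆ + D⋆ ≥ 0` concludes.
-/

open scoped RealInnerProductSpace NNReal Topology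
open Set Filter

lemma le_of_forall_mem_Ioo_le_add_mul {a b c : ℝ} (h : ∀ t ∈ Ioo (0 : ℝ) 1, a ≤ b + t * c) :
    a ≤ b := by
  have hlim : Tendsto (fun t : ℝ => b + t * c) (𝓝[>] 0) (𝓝 b) := by
    have hcont : Continuous fun t : ℝ => b + t * c := by fun_prop
    simpa using (hcont.tendsto 0).mono_left nhdsWithin_le_nhds
  exact ge_of_tendsto hlim (eventually_of_mem (Ioo_mem_nhdsGT one_pos) h)

variable {E : Type*} [NormedAddCommGroup E] [InnerProductSpace ℝ E]

def HasSubgradientAt (f : E → ℝ) (s x : E) : Prop :=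
  ∀ y, f x + ⟪s, y - x⟫ ≤ f y

theorem ConvexOn.hasSubgradientAt_of_le_sub_sq {f : E → ℝ} (hf : ConvexOn ℝ univ f)
    {s x : E} {c : ℝ} (h : ∀ y, f x + ⟪s, y - x⟫ - c * ‖y - x‖ ^ 2 ≤ f y) :
    HasSubgradientAt f s x := by
  intro y
  refine le_of_forall_mem_Ioo_le_add_mul (c := c * ‖y - x‖ ^ 2) fun t ⟨ht0, ht1⟩ => ?_
  have hseg : f (x + t • (y - x)) ≤ (1 - t) * f x + t * f y := by
    have := hf.2 (mem_univ x) (mem_univ y) (sub_nonneg.2 ht1.le) ht0.le (by ring)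
    rwa [show (1 - t) • x + t • y = x + t • (y - x) by module, smul_eq_mul, smul_eq_mul] at this
  have hquad := h (x + t • (y - x))
  rw [add_sub_cancel_left, inner_smul_right, norm_smul, Real.norm_of_nonneg ht0.le,
    mul_pow] at hquad
  have : t * (f x + ⟪s, y - x⟫) ≤ t * (f y + t * (c * ‖y - x‖ ^ 2)) := by nlinarith
  exact le_of_mul_le_mul_left this ht0

theorem StrongConvexOn.le_add_inner_add_sq {f : E → ℝ} {σ : ℝ} (hf : StrongConvexOn univ σ f)
    {s x : E} {c : ℝ} (h : ∀ y, f x + ⟪s, y - x⟫ - c * ‖y - x‖ ^ 2 ≤ f y) (y : E) :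
    f x + ⟪s, y - x⟫ + σ / 2 * ‖y - x‖ ^ 2 ≤ f y := by
  -- `‖y‖² = ‖x‖² + 2⟪x, y - x⟫ + ‖y - x‖²` turns minorants of `f` into minorants of `f - σ/2 ‖·‖²`
  have hsq : ∀ y : E, ‖y‖ ^ 2 = ‖x‖ ^ 2 + 2 * ⟪x, y - x⟫ + ‖y - x‖ ^ 2 := fun y => by
    rw [← norm_add_sq_real, add_sub_cancel]
  have key := (strongConvexOn_iff_convex.1 hf).hasSubgradientAt_of_le_sub_sq
    (s := s - σ • x) (x := x) (c := c + σ / 2) fun y => by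
      simp only [inner_sub_left, real_inner_smul_left, hsq y]
      linarith [h y]
  have := key y
  simp only [inner_sub_left, real_inner_smul_left, hsq y] at this
  linarith

theorem ConvexOn.exists_hasSubgradientAt [FiniteDimensional ℝ E] {f : E → ℝ}
    (hf : ConvexOn ℝ univ f) (x : E) : ∃ s, HasSubgradientAt f s x := by
  let S : Set (E × ℝ) := {p | p.1 ∈ univ ∧ f p.1 < p.2}
  have hS : Convex ℝ S := convex_iff_openSegment_subset.2 fun p hp q hq =>
    hf.openSegment_subset_strict_epigraph p q hp ⟨hq.1, hq.2.le⟩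
  have hSopen : IsOpen S := by
    have hcont : Continuous f := continuousOn_univ.1 (hf.continuousOn isOpen_univ)
    simpa [S] using isOpen_lt (hcont.comp continuous_fst) continuous_snd
  obtain ⟨ℓ, hℓ⟩ := geometric_hahn_banach_open_point hS hSopen (x := (x, f x)) (by simp [S])
  set c := ℓ (0, 1)
  have hℓ_apply : ∀ y r, ℓ (y, r) = ℓ (y, 0) + r * c := fun y r => by
    rw [show ((y, r) : E × ℝ) = (y, 0) + r • (0, 1) by simp, map_add, map_smul, smul_eq_mul]
  have hc : c < 0 := by
    have := hℓ (x, f x + 1) (by simp [S])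
    rw [hℓ_apply, hℓ_apply x (f x)] at this
    linarith
  have hsep : ∀ y, ℓ (y, 0) - ℓ (x, 0) ≤ (f x - f y) * c := fun y =>
    le_of_forall_mem_Ioo_le_add_mul (c := -c) fun t ht => by
      have := hℓ (y, f y + t) (by simp [S, ht.1])
      rw [hℓ_apply, hℓ_apply x (f x)] at this
      linarith
  refine ⟨(-c)⁻¹ • (InnerProductSpace.toDual ℝ E).symm (ℓ.comp (.inl ℝ E ℝ)), fun y => ?_⟩
  rw [real_inner_smul_left, InnerProductSpace.toDual_symm_apply, map_sub]
  have := mul_le_mul_of_nonneg_left (hsep y) (inv_nonneg.2 (neg_nonneg.2 hc.le))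
  rw [show (-c)⁻¹ * ((f x - f y) * c) = f y - f x by field_simp [hc.ne]; ring] at this
  simp only [ContinuousLinearMap.comp_apply, ContinuousLinearMap.inl_apply]
  linarith

def IsFenchelConjugate (f fstar : E → ℝ) : Prop :=
  ∀ z, IsLUB (range fun v => ⟪z, v⟫ - f v) (fstar z)

namespace IsFenchelConjugate

variable {f fstar : E → ℝ}

theorem inner_sub_le (h : IsFenchelConjugate f fstar) (z v : E) : ⟪z, v⟫ - f v ≤ fstar z :=
  (h z).1 ⟨v, rfl⟩

theorem convexOn (h : IsFenchelConjugate f fstar) : ConvexOn ℝ univ fstar := by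
  refine ⟨convex_univ, fun z₁ _ z₂ _ a b ha hb hab => (h _).2 ?_⟩
  rintro _ ⟨v, rfl⟩
  have h₁ := mul_le_mul_of_nonneg_left (h.inner_sub_le z₁ v) ha
  have h₂ := mul_le_mul_of_nonneg_left (h.inner_sub_le z₂ v) hb
  simp only [smul_eq_mul, inner_add_left, real_inner_smul_left]
  linear_combination h₁ + h₂ + f v * hab

theorem le_of_hasSubgradientAt (h : IsFenchelConjugate f fstar) {s v : E}
    (hs : HasSubgradientAt f s v) : fstar s ≤ ⟪s, v⟫ - f v :=
  (h s).2 <| by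
    rintro _ ⟨y, rfl⟩
    have := hs y
    rw [inner_sub_right] at this
    linarith

theorem add_le_inner [FiniteDimensional ℝ E] (h : IsFenchelConjugate f fstar)
    (hf : ConvexOn ℝ univ f) {s z : E} (hs : HasSubgradientAt fstar s z) :
    f s + fstar z ≤ ⟪z, s⟫ := by
  obtain ⟨t, ht⟩ := hf.exists_hasSubgradientAt s
  have h₁ := h.le_of_hasSubgradientAt ht
  have h₂ := hs t
  rw [inner_sub_right, real_inner_comm t s, real_inner_comm z s] at h₂
  linarith

theorem add_le_inner_add_sq [FiniteDimensional ℝ E] (h : IsFenchelConjugate f fstar)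
    (hf : ConvexOn ℝ univ f) {σ : ℝ} (hσ : 0 < σ) {s z : E}
    (hs : ∀ y, fstar z + ⟪s, y - z⟫ + σ / 2 * ‖y - z‖ ^ 2 ≤ fstar y) (v : E) :
    f v + fstar z ≤ ⟪z, v⟫ + 1 / (2 * σ) * ‖v - s‖ ^ 2 := by
  obtain ⟨t, ht⟩ := hf.exists_hasSubgradientAt v
  have h₁ := h.le_of_hasSubgradientAt ht
  have h₂ := hs t
  -- Young: `⟪a, b⟫ ≤ σ/2 ‖b‖² + ‖a‖²/(2σ)`, from expanding `‖a - σ b‖² ≥ 0`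
  have hyoung : ⟪v - s, t - z⟫ ≤ σ / 2 * ‖t - z‖ ^ 2 + 1 / (2 * σ) * ‖v - s‖ ^ 2 := by
    have := norm_sub_sq_real (v - s) (σ • (t - z))
    rw [inner_smul_right, norm_smul, Real.norm_of_nonneg hσ.le] at this
    have hnn := sq_nonneg ‖v - s - σ • (t - z)‖
    field_simp
    nlinarith
  simp only [inner_sub_left, inner_sub_right, real_inner_comm] at h₁ h₂ hyoung ⊢
  linarith

end IsFenchelConjugate

section LipschitzGradient

variable [CompleteSpace E] {f : E → ℝ} {f' : E → E} {K : ℝ≥0}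

theorem HasGradientAt.hasDerivAt_comp_lineMap {g x y : E} {t : ℝ}
    (h : HasGradientAt f g (AffineMap.lineMap x y t)) :
    HasDerivAt (fun t => f (AffineMap.lineMap x y t)) ⟪g, y - x⟫ t := by
  have := h.hasFDerivAt.comp_hasDerivAt t AffineMap.hasDerivAt_lineMap
  simpa [Function.comp_def] using this

theorem ConvexOn.hasSubgradientAt_of_hasGradientAt (hf : ConvexOn ℝ univ f)
    {g x : E} (h : HasGradientAt f g x) : HasSubgradientAt f g x := by
  intro y
  have hline : ConvexOn ℝ univ fun t => f (AffineMap.lineMap x y t) :=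
    hf.comp_affineMap (AffineMap.lineMap x y)
  have := hline.le_slope_of_hasDerivAt (mem_univ 0) (mem_univ 1) one_pos
    (HasGradientAt.hasDerivAt_comp_lineMap (by simpa using h))
  simp only [slope_def_field, AffineMap.lineMap_apply_zero, AffineMap.lineMap_apply_one] at this
  linarith

theorem le_add_inner_add_sq_of_lipschitzWith (hf : ∀ z, HasGradientAt f (f' z) z)
    (hK : LipschitzWith K f') (x y : E) :
    f y ≤ f x + ⟪f' x, y - x⟫ + K / 2 * ‖y - x‖ ^ 2 := by
  let φ : ℝ → ℝ := fun t =>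
    f (AffineMap.lineMap x y t) - t * ⟪f' x, y - x⟫ - K / 2 * t ^ 2 * ‖y - x‖ ^ 2
  have hφ : ∀ t, HasDerivAt φ
      (⟪f' (AffineMap.lineMap x y t), y - x⟫ - ⟪f' x, y - x⟫ - K * t * ‖y - x‖ ^ 2) t := by
    intro t
    have := ((HasGradientAt.hasDerivAt_comp_lineMap (x := x) (y := y) (hf _)).sub
      ((hasDerivAt_id t).mul_const ⟪f' x, y - x⟫)).sub
      (((hasDerivAt_pow 2 t).const_mul (K / 2 : ℝ)).mul_const (‖y - x‖ ^ 2))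
    exact this.congr_deriv (by norm_num only [Nat.cast_ofNat, pow_one]; ring)
  have hφ' : ∀ t ∈ interior (Ici (0 : ℝ)),
      ⟪f' (AffineMap.lineMap x y t), y - x⟫ - ⟪f' x, y - x⟫ - K * t * ‖y - x‖ ^ 2 ≤ 0 := by
    intro t ht
    rw [interior_Ici, mem_Ioi] at ht
    have hlip := hK.norm_sub_le (AffineMap.lineMap x y t) x
    have hsub : AffineMap.lineMap x y t - x = t • (y - x) := AffineMap.lineMap_vsub_left x y t
    rw [hsub, norm_smul, Real.norm_of_nonneg ht.le] at hlip
    have hcs := real_inner_le_norm (f' (AffineMap.lineMap x y t) - f' x) (y - x)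
    rw [inner_sub_left] at hcs
    have := mul_le_mul_of_nonneg_right hlip (norm_nonneg (y - x))
    nlinarith
  have := antitoneOn_of_hasDerivWithinAt_nonpos (convex_Ici 0)
    (fun t _ => (hφ t).continuousAt.continuousWithinAt) (fun t _ => (hφ t).hasDerivWithinAt) hφ'
    (by simp) (by simp) zero_le_one
  simp [φ] at this
  linarith


theorem ConvexOn.add_inner_add_sq_le_of_lipschitzWith (hconv : ConvexOn ℝ univ f)
    (hf : ∀ z, HasGradientAt f (f' z) z) (hK : LipschitzWith K f') (hK0 : 0 < K) (x y : E) :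
    f x + ⟪f' x, y - x⟫ + 1 / (2 * K) * ‖f' y - f' x‖ ^ 2 ≤ f y := by
  -- `φ = f - ⟪f' x, ·⟫` is minimal at `x`; compare with one gradient step of `φ` from `y`
  let φ : E → ℝ := fun z => f z - ⟪f' x, z⟫
  have hφ : ∀ z, HasGradientAt φ (f' z - f' x) z := fun z => by
    rw [hasGradientAt_iff_hasFDerivAt, map_sub]
    exact (hf z).hasFDerivAt.sub (innerSL ℝ (f' x)).hasFDerivAt
  have hφK : LipschitzWith K fun z => f' z - f' x := by
    simpa using hK.sub (LipschitzWith.const (f' x))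
  set g := f' y - f' x
  have hmin : φ x ≤ φ (y - (K⁻¹ : ℝ) • g) := by
    have := hconv.hasSubgradientAt_of_hasGradientAt (hf x) (y - (K⁻¹ : ℝ) • g)
    simp only [φ, inner_sub_right] at this ⊢
    linarith
  have hdesc := le_add_inner_add_sq_of_lipschitzWith hφ hφK y (y - (K⁻¹ : ℝ) • g)
  rw [sub_sub_cancel_left, inner_neg_right, inner_smul_right, real_inner_self_eq_norm_sq,
    norm_neg, norm_smul, Real.norm_of_nonneg (by positivity)] at hdesc
  have hstep : (K : ℝ) / 2 * ((K : ℝ)⁻¹ * ‖g‖) ^ 2 =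
      (K⁻¹ : ℝ) * ‖g‖ ^ 2 - 1 / (2 * K) * ‖g‖ ^ 2 := by
    field_simp
    ring
  have key : φ x ≤ φ y - 1 / (2 * K) * ‖g‖ ^ 2 := by linarith [hmin.trans hdesc]
  simp only [φ] at key
  rw [inner_sub_right]
  linarith

end LipschitzGradient

section DualOptimality

variable [CompleteSpace E] {F ξstar : E → ℝ} {K : ℝ≥0} {σ : ℝ} {αs : E}

theorem IsMinOn.le_add_inner_gradient_add_sq (hF : Differentiable ℝ F)
    (hK : LipschitzWith K (gradient F)) (hξstar : StrongConvexOn univ σ ξstar)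
    (hmin : IsMinOn (fun β => F β + ξstar (-β)) univ αs) (y : E) :
    ξstar (-αs) + ⟪gradient F αs, y - -αs⟫ + σ / 2 * ‖y - -αs‖ ^ 2 ≤ ξstar y := by
  refine hξstar.le_add_inner_add_sq (c := K / 2) (fun y => ?_) y
  have hdesc := le_add_inner_add_sq_of_lipschitzWith (fun β => (hF β).hasGradientAt) hK αs (-y)
  have hopt : F αs + ξstar (-αs) ≤ F (-y) + ξstar y := by simpa using hmin (mem_univ (-y))
  rw [show -y - αs = -(y - -αs) by abel, inner_neg_right, norm_neg] at hdesc
  linarith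

theorem IsMinOn.sq_add_sq_le_sub (hF : Differentiable ℝ F) (hFconv : ConvexOn ℝ univ F)
    (hK : LipschitzWith K (gradient F)) (hK0 : 0 < K) (hξstar : StrongConvexOn univ σ ξstar)
    (hmin : IsMinOn (fun β => F β + ξstar (-β)) univ αs) (α : E) :
    σ / 2 * ‖α - αs‖ ^ 2 + 1 / (2 * K) * ‖gradient F α - gradient F αs‖ ^ 2 ≤
      F α + ξstar (-α) - (F αs + ξstar (-αs)) := by
  have hstrong := hmin.le_add_inner_gradient_add_sq hF hK hξstar (-α)
  have hcoco := hFconv.add_inner_add_sq_le_of_lipschitzWith (fun β => (hF β).hasGradientAt) hK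
    hK0 αs α
  rw [neg_sub_neg, ← neg_sub, inner_neg_right, norm_neg] at hstrong
  linarith

end DualOptimality

section PrimalDual

variable [FiniteDimensional ℝ E] {V : Type*} [NormedAddCommGroup V] [InnerProductSpace ℝ V]
  [FiniteDimensional ℝ V] {ξ ξstar : E → ℝ} {g gstar : V → ℝ} {K : ℝ≥0} {σ : ℝ} {αs : E}

theorem HasGradientAt.comp_linearMap {x : E} {g' : V} (A : E →ₗ[ℝ] V)
    (hg : HasGradientAt g g' (A x)) :
    HasGradientAt (fun x => g (A x)) (LinearMap.adjoint A g') x := by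
  rw [hasGradientAt_iff_hasFDerivAt] at hg ⊢
  refine (hg.comp x (LinearMap.toContinuousLinearMap A).hasFDerivAt).congr_fderiv ?_
  ext v
  simp [LinearMap.adjoint_inner_left]

theorem zero_le_primal_add_dual (hξ : IsFenchelConjugate ξ ξstar)
    (hg : IsFenchelConjugate g gstar) (A : E →ₗ[ℝ] V) (w : V) (β : E) :
    0 ≤ ξ (LinearMap.adjoint A w) + g w + (gstar (A β) + ξstar (-β)) := by
  have h₁ := hξ.inner_sub_le (-β) (LinearMap.adjoint A w)
  have h₂ := hg.inner_sub_le (A β) w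
  rw [inner_neg_left, LinearMap.adjoint_inner_right] at h₁
  linarith

theorem IsMinOn.primal_add_dual_le (hξ : ConvexOn ℝ univ ξ) (hg : ConvexOn ℝ univ g)
    (hξc : IsFenchelConjugate ξ ξstar) (hgc : IsFenchelConjugate g gstar) (A : E →ₗ[ℝ] V)
    (hgstar : Differentiable ℝ gstar) (hK : LipschitzWith K (gradient fun β => gstar (A β)))
    (hσ : 0 < σ) (hξstar : StrongConvexOn univ σ ξstar)
    (hmin : IsMinOn (fun β => gstar (A β) + ξstar (-β)) univ αs) (α : E) :
    ξ (LinearMap.adjoint A (gradient gstar (A α))) + g (gradient gstar (A α)) +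
        (gstar (A αs) + ξstar (-αs)) ≤
      K / 2 * ‖α - αs‖ ^ 2 + 1 / (2 * σ) *
        ‖gradient (fun β => gstar (A β)) α - gradient (fun β => gstar (A β)) αs‖ ^ 2 := by
  set w := gradient gstar (A α)
  have hF : ∀ β, HasGradientAt (fun β => gstar (A β))
      (LinearMap.adjoint A (gradient gstar (A β))) β :=
    fun β => (hgstar (A β)).hasGradientAt.comp_linearMap A
  have hFd : Differentiable ℝ fun β => gstar (A β) := fun β => (hF β).differentiableAt
  rw [(hF α).gradient]
  have hg_w : g w + gstar (A α) ≤ ⟪A α, w⟫ :=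
    hgc.add_le_inner hg (hgc.convexOn.hasSubgradientAt_of_hasGradientAt (hgstar _).hasGradientAt)
  have hξ_u := hξc.add_le_inner_add_sq hξ hσ (hmin.le_add_inner_gradient_add_sq hFd hK hξstar)
    (LinearMap.adjoint A w)
  have hdesc := le_add_inner_add_sq_of_lipschitzWith (fun β => (hFd β).hasGradientAt) hK α αs
  rw [(hF α).gradient, inner_sub_right, real_inner_comm, real_inner_comm α, norm_sub_rev] at hdesc
  rw [← LinearMap.adjoint_inner_right] at hg_w
  rw [inner_neg_left] at hξ_u
  linarith

end PrimalDual

theorem dual_to_primal_strongly_convex_general {d n : ℕ} (L σ : ℝ) (hL : 0 < L) (hσ : 0 < σ)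
    (X : Matrix (Fin d) (Fin n) ℝ)
    (ξ : EuclideanSpace ℝ (Fin n) → ℝ) (hξ : ConvexOn ℝ Set.univ ξ)
    (g : EuclideanSpace ℝ (Fin d) → ℝ) (hg : ConvexOn ℝ Set.univ g)
    (gstar : EuclideanSpace ℝ (Fin d) → ℝ)
    (hgstar : ∀ z, IsLUB (Set.range fun w => ⟪z, w⟫ - g w) (gstar z))
    (ξstar : EuclideanSpace ℝ (Fin n) → ℝ)
    (hξstar : ∀ u, IsLUB (Set.range fun v => ⟪u, v⟫ - ξ v) (ξstar u))
    (P : EuclideanSpace ℝ (Fin d) → ℝ)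
    (hP : ∀ w, P w = ξ (Matrix.toEuclideanLin X.transpose w) + g w)
    (Pstar : ℝ) (hPatt : ∃ w, P w = Pstar)
    (D : EuclideanSpace ℝ (Fin n) → ℝ)
    (hD : ∀ α, D α = gstar (Matrix.toEuclideanLin X α) + ξstar (-α))
    (Dstar : ℝ) (hDlb : ∀ α, Dstar ≤ D α) (hDatt : ∃ α, D α = Dstar)
    (hgdiff : Differentiable ℝ gstar)
    (hlip : LipschitzWith (Real.toNNReal L)
      (fun α => gradient (fun β => gstar (Matrix.toEuclideanLin X β)) α))
    (hstrong : ConvexOn ℝ Set.univ (fun u => ξstar u - σ / 2 * ‖u‖ ^ 2))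
    (ε : ℝ) (α : EuclideanSpace ℝ (Fin n))
    (hα : D α - Dstar ≤ ε) :
    P (gradient gstar (Matrix.toEuclideanLin X α)) - Pstar ≤ ε * (1 + L / σ) := by
  obtain ⟨w₀, hw₀⟩ := hPatt
  obtain ⟨αs, hαs⟩ := hDatt
  set A := Matrix.toEuclideanLin X
  have hAt : Matrix.toEuclideanLin X.transpose = LinearMap.adjoint A := by
    rw [← Matrix.toEuclideanLin_conjTranspose_eq_adjoint,
      Matrix.conjTranspose_eq_transpose_of_trivial]
  have hLcoe : (L.toNNReal : ℝ) = L := Real.coe_toNNReal L hL.le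
  have hξstar' : StrongConvexOn univ σ ξstar := strongConvexOn_iff_convex.2 hstrong
  have hmin : IsMinOn (fun β => gstar (A β) + ξstar (-β)) univ αs := isMinOn_iff.2 fun β _ => by
    rw [← hD, ← hD, hαs]
    exact hDlb β
  have hFd : Differentiable ℝ fun β => gstar (A β) :=
    hgdiff.comp (LinearMap.toContinuousLinearMap A).differentiable
  have hweak := zero_le_primal_add_dual hξstar hgstar A w₀ αs
  have hFconv := (IsFenchelConjugate.convexOn hgstar).comp_linearMap A
  have hgap := hmin.sq_add_sq_le_sub hFd hFconv hlip (Real.toNNReal_pos.2 hL) hξstar' α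
  have hprimal := hmin.primal_add_dual_le hξ hg hξstar hgstar A hgdiff hlip hσ hξstar' α
  rw [hLcoe] at hgap hprimal
  have hε : 0 ≤ ε := (sub_nonneg.2 (hDlb α)).trans hα
  set Q := ‖α - αs‖ ^ 2
  set N := ‖gradient (fun β => gstar (A β)) α - gradient (fun β => gstar (A β)) αs‖ ^ 2
  calc P (gradient gstar (A α)) - Pstar ≤ L / 2 * Q + 1 / (2 * σ) * N := by
        rw [← hw₀, hP, hP, hAt]
        linarith [hD αs]
    _ = L / σ * (σ / 2 * Q + 1 / (2 * L) * N) := by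
        field_simp
    _ ≤ L / σ * ε := by
        gcongr
        linarith [hD α, hD αs]
    _ ≤ ε * (1 + L / σ) := by nlinarith [div_pos hL hσ]

/-- part 1 of Theorem 5 of the paper / Lee–Chang: in the
primal–dual ERM setting with `ξ*` being `σ`-strongly convex, an `ε`-accurate dual
solution `α` yields a primal point `w(α) = ∇g*(Xα)` with
`P(w(α)) − P* ≤ ε(1 + L/σ)`. -/
theorem dual_to_primal_strongly_convex {d n : ℕ} (L σ : ℝ) (hL : 0 < L) (hσ : 0 < σ)
    (X : Matrix (Fin d) (Fin n) ℝ)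
    (ξ : EuclideanSpace ℝ (Fin n) → ℝ) (hξ : ConvexOn ℝ Set.univ ξ)
    (g : EuclideanSpace ℝ (Fin d) → ℝ) (hg : ConvexOn ℝ Set.univ g)
    (gstar : EuclideanSpace ℝ (Fin d) → ℝ)
    (hgstar : ∀ z, IsLUB (Set.range fun w => ⟪z, w⟫ - g w) (gstar z))
    (ξstar : EuclideanSpace ℝ (Fin n) → ℝ)
    (hξstar : ∀ u, IsLUB (Set.range fun v => ⟪u, v⟫ - ξ v) (ξstar u))
    (P : EuclideanSpace ℝ (Fin d) → ℝ)
    (hP : ∀ w, P w = ξ (Matrix.toEuclideanLin X.transpose w) + g w)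
    (Pstar : ℝ) (hPlb : ∀ w, Pstar ≤ P w) (hPatt : ∃ w, P w = Pstar)
    (D : EuclideanSpace ℝ (Fin n) → ℝ)
    (hD : ∀ α, D α = gstar (Matrix.toEuclideanLin X α) + ξstar (-α))
    (Dstar : ℝ) (hDlb : ∀ α, Dstar ≤ D α) (hDatt : ∃ α, D α = Dstar)
    (hgdiff : Differentiable ℝ gstar)
    (hlip : LipschitzWith (Real.toNNReal L)
      (fun α => gradient (fun β => gstar (Matrix.toEuclideanLin X β)) α))
    (hstrong : ConvexOn ℝ Set.univ (fun u => ξstar u - σ / 2 * ‖u‖ ^ 2))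
    (ε : ℝ) (hε : 0 < ε) (α : EuclideanSpace ℝ (Fin n))
    (hα : D α - Dstar ≤ ε) :
    P (gradient gstar (Matrix.toEuclideanLin X α)) - Pstar ≤ ε * (1 + L / σ) :=
  dual_to_primal_strongly_convex_general L σ hL hσ X ξ hξ g hg gstar hgstar ξstar hξstar P hP Pstar
    hPatt D hD Dstar hDlb hDatt hgdiff hlip hstrong ε α hα
end
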